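/- Measure of the union bound for bushy subtrees: let (D_i)_{i∈ℕ} be finite sets of naturals with |D_i| = i + 2 + n for a fixed n, and let T_i ⊆ 2^{<ℕ} be the downward closure of { σ : ∃ a, b ∈ D_i, a, b < |σ|, σ(a) = 0 ∧ σ(b) = 1 }. Then the measure of the set of infinite binary sequences all of whose prefixes lie in T_i equals 1 − 2^{-(|D_i|−1)} = 1 − 2^{-(i+1+n)}, and consequently the intersection ⋂_i [T_i] has measure at least 1 − 2^{-n}. -/

import Mathlib

/-!
For a tree `T`, the proportion `lvlCard T s / 2 ^ s` of strings of length `s` lying in `T` is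
antitone in `s`, so `treeMeasure T` is its eventual value. Once `s` exceeds every element of `D`,
a string of length `s` lies in `nonconstTree D` exactly when it is not constant on `D`, and
`2 * 2 ^ (s - |D|)` strings are constant on `D`. For the intersection, the strings of length `s`
missing from some `T_i` are counted by the union bound, and `∑ i, 2 ^ (-(i + 1 + n)) ≤ 2 ^ (-n)`.
-/

open Classical Filter

noncomputable section


/-- The number of strings of length `s` in `T`. -/
def lvlCard (T : Set (List Bool)) (s : ℕ) : ℕ :=
  {σ ∈ T | σ.length = s}.ncard

/-- The measure of the set of paths of a tree `T ⊆ 2^{<ℕ}` under the uniform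
measure on Cantor space. -/
def treeMeasure (T : Set (List Bool)) : ℝ :=
  ⨅ s : ℕ, (lvlCard T s : ℝ) / 2 ^ s

open Finset

def IsTree (T : Set (List Bool)) : Prop :=
  ∀ ⦃σ τ : List Bool⦄, σ <+: τ → τ ∈ T → σ ∈ T

def nonconstTree (D : Finset ℕ) : Set (List Bool) :=
  {σ | ∃ τ : List Bool, σ <+: τ ∧ ∃ a ∈ D, ∃ b ∈ D, a < τ.length ∧ b < τ.length ∧
    τ.getD a true = false ∧ τ.getD b false = true}

section Counting

variable {α β : Type*} [Fintype α] [DecidableEq α] [Fintype β] [DecidableEq β]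

lemma card_filter_forall_mem_eq_const (E : Finset α) (v : β) :
    #{f : α → β | ∀ a ∈ E, f a = v} = Fintype.card β ^ #Eᶜ := by
  have : ({f : α → β | ∀ a ∈ E, f a = v} : Finset _) =
      Fintype.piFinset fun a => if a ∈ E then {v} else univ := by
    ext f
    simp only [mem_filter, mem_univ, true_and, Fintype.mem_piFinset]
    refine forall_congr' fun a => ?_
    split_ifs <;> simp [*]
  rw [this, Fintype.card_piFinset]
  simp [apply_ite card, prod_ite, ← compl_filter]

lemma card_filter_constOn_bool (E : Finset α) (hE : E.Nonempty) :
    #{f : α → Bool | ¬((∃ a ∈ E, f a = false) ∧ ∃ b ∈ E, f b = true)} = 2 ^ (#Eᶜ + 1) := by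
  have : ({f : α → Bool | ¬((∃ a ∈ E, f a = false) ∧ ∃ b ∈ E, f b = true)} : Finset _) =
      ({f : α → Bool | ∀ a ∈ E, f a = true} : Finset _) ∪
        ({f : α → Bool | ∀ a ∈ E, f a = false} : Finset _) := by
    ext f
    simp only [mem_filter, mem_univ, true_and, mem_union]
    rw [not_and_or]
    simp only [not_exists, not_and, Bool.not_eq_false, Bool.not_eq_true]
  rw [this, card_union_of_disjoint, card_filter_forall_mem_eq_const,
    card_filter_forall_mem_eq_const, Fintype.card_bool, pow_succ, mul_two]
  refine disjoint_filter.2 fun f _ htrue hfalse => ?_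
  obtain ⟨a, ha⟩ := hE
  simpa [htrue a ha] using hfalse a ha

end Counting

section Levels

variable {T : Set (List Bool)}

lemma lvlCard_eq_card_ofFn (T : Set (List Bool)) (s : ℕ) :
    lvlCard T s = #{f : Fin s → Bool | List.ofFn f ∈ T} := by
  rw [lvlCard, ← Set.ncard_coe_finset, ← Set.ncard_image_of_injective _ List.ofFn_injective]
  congr 1
  ext σ
  simp only [Set.mem_ofPred_eq, coe_filter, mem_univ, true_and, Set.mem_image]
  constructor
  · rintro ⟨h, rfl⟩
    exact ⟨fun i => σ[i], by simpa using h, List.ofFn_getElem⟩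
  · rintro ⟨f, h, rfl⟩
    simp [h]

lemma lvlCard_add_lvlCard_compl (T : Set (List Bool)) (s : ℕ) :
    lvlCard T s + lvlCard Tᶜ s = 2 ^ s := by
  simp only [lvlCard_eq_card_ofFn, Set.mem_compl_iff]
  rw [card_filter_add_card_filter_not, card_univ, Fintype.card_fun, Fintype.card_bool,
    Fintype.card_fin]

lemma lvlCard_div_two_pow_eq_one_sub (T : Set (List Bool)) (s : ℕ) :
    (lvlCard T s : ℝ) / 2 ^ s = 1 - lvlCard Tᶜ s / 2 ^ s := by
  have := lvlCard_add_lvlCard_compl T s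
  rw [eq_sub_iff_add_eq, ← add_div, div_eq_one_iff_eq (by positivity)]
  exact_mod_cast this

lemma lvlCard_iUnion_le (A : ℕ → Set (List Bool)) (s N : ℕ)
    (hA : ∀ i ≥ N, lvlCard (A i) s = 0) :
    lvlCard (⋃ i, A i) s ≤ ∑ i ∈ range N, lvlCard (A i) s := by
  simp only [lvlCard_eq_card_ofFn] at hA ⊢
  refine (card_le_card fun f hf => ?_).trans card_biUnion_le
  obtain ⟨i, hi⟩ := Set.mem_iUnion.1 (mem_filter.1 hf).2
  have hiN : i < N := by
    by_contra! hiN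
    simpa using (card_eq_zero.1 (hA i hiN)).subset (mem_filter.2 ⟨mem_univ f, hi⟩)
  exact mem_biUnion.2 ⟨i, mem_range.2 hiN, mem_filter.2 ⟨mem_univ f, hi⟩⟩

lemma IsTree.lvlCard_succ_le (hT : IsTree T) (s : ℕ) : lvlCard T (s + 1) ≤ 2 * lvlCard T s := by
  simp only [lvlCard_eq_card_ofFn]
  calc #{f : Fin (s + 1) → Bool | List.ofFn f ∈ T}
      ≤ #(({g : Fin s → Bool | List.ofFn g ∈ T} : Finset _) ×ˢ (univ : Finset Bool)) := by
        refine card_le_card_of_injOn (fun f => (Fin.init f, f (Fin.last s))) (fun f hf => ?_)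
          (fun f _ g _ hfg => ?_)
        · have hf : List.ofFn f ∈ T := (mem_filter.1 hf).2
          rw [List.ofFn_succ'] at hf
          exact mem_product.2 ⟨mem_filter.2 ⟨mem_univ _, hT (List.prefix_concat _ _) hf⟩,
            mem_univ _⟩
        · rw [← Fin.snoc_init_self f, ← Fin.snoc_init_self g]
          simp only [Prod.mk.injEq] at hfg
          rw [hfg.1, hfg.2]
    _ = 2 * #{g : Fin s → Bool | List.ofFn g ∈ T} := by
        rw [card_product, card_univ, Fintype.card_bool, mul_comm]

lemma IsTree.antitone_lvlCard_div (hT : IsTree T) :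
    Antitone fun s => (lvlCard T s : ℝ) / 2 ^ s := by
  refine antitone_nat_of_succ_le fun s => ?_
  rw [pow_succ, mul_comm, ← div_div, div_le_div_iff_of_pos_right (by positivity),
    div_le_iff₀ two_pos, mul_comm]
  exact_mod_cast hT.lvlCard_succ_le s

lemma treeMeasure_le_lvlCard_div (T : Set (List Bool)) (s : ℕ) :
    treeMeasure T ≤ lvlCard T s / 2 ^ s :=
  ciInf_le ⟨0, by rintro _ ⟨s, rfl⟩; positivity⟩ s

lemma IsTree.treeMeasure_eq (hT : IsTree T) {N : ℕ} {c : ℝ}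
    (h : ∀ s ≥ N, (lvlCard T s : ℝ) / 2 ^ s = c) : treeMeasure T = c :=
  le_antisymm ((treeMeasure_le_lvlCard_div T N).trans_eq (h N le_rfl))
    (le_ciInf fun s => (h _ (le_max_right s N)).ge.trans
      (hT.antitone_lvlCard_div (le_max_left s N)))

end Levels

lemma sum_range_one_div_two_pow_le (N n : ℕ) :
    ∑ i ∈ range N, (1 : ℝ) / 2 ^ (i + 1 + n) ≤ 1 / 2 ^ n :=
  calc ∑ i ∈ range N, (1 : ℝ) / 2 ^ (i + 1 + n)
      = 1 / 2 ^ (n + 1) * ∑ i ∈ range N, (1 / 2 : ℝ) ^ i := by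
        rw [mul_sum]
        refine sum_congr rfl fun i _ => ?_
        rw [div_pow, one_pow, div_mul_div_comm, one_mul, ← pow_add]
        ring_nf
    _ ≤ 1 / 2 ^ (n + 1) * 2 := by gcongr; exact sum_geometric_two_le N
    _ = 1 / 2 ^ n := by rw [pow_succ]; field_simp

lemma one_sub_le_treeMeasure_iInter (T : ℕ → Set (List Bool)) (n : ℕ)
    (hT : ∀ i, 1 - 1 / 2 ^ (i + 1 + n) ≤ treeMeasure (T i)) :
    1 - 1 / 2 ^ n ≤ treeMeasure (⋂ i, T i) := by
  refine le_ciInf fun s => ?_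
  have hcompl (i : ℕ) : (lvlCard (T i)ᶜ s : ℝ) / 2 ^ s ≤ 1 / 2 ^ (i + 1 + n) := by
    have := (hT i).trans (treeMeasure_le_lvlCard_div (T i) s)
    rw [lvlCard_div_two_pow_eq_one_sub] at this
    linarith
  -- a count of strings of length `s` bounded by `2 ^ s / 2 ^ (i + 1 + n) < 1` is `0`
  have hvanish : ∀ i ≥ s, lvlCard (T i)ᶜ s = 0 := by
    intro i hi
    by_contra h
    have hone : (1 : ℝ) ≤ lvlCard (T i)ᶜ s := by exact_mod_cast Nat.one_le_iff_ne_zero.2 h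
    have hlt : (1 : ℝ) / 2 ^ (i + 1 + n) < 1 / 2 ^ s := by
      gcongr
      · norm_num
      · omega
    linarith [div_le_div_of_nonneg_right hone (by positivity : (0 : ℝ) ≤ 2 ^ s), hcompl i]
  rw [lvlCard_div_two_pow_eq_one_sub, Set.compl_iInter, sub_le_sub_iff_left]
  calc (lvlCard (⋃ i, (T i)ᶜ) s : ℝ) / 2 ^ s
      ≤ (∑ i ∈ range s, lvlCard (T i)ᶜ s : ℕ) / 2 ^ s := by
        gcongr
        exact lvlCard_iUnion_le _ s s hvanish
    _ = ∑ i ∈ range s, (lvlCard (T i)ᶜ s : ℝ) / 2 ^ s := by push_cast; rw [sum_div]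
    _ ≤ ∑ i ∈ range s, (1 : ℝ) / 2 ^ (i + 1 + n) := sum_le_sum fun i _ => hcompl i
    _ ≤ 1 / 2 ^ n := sum_range_one_div_two_pow_le s n

lemma isTree_nonconstTree (D : Finset ℕ) : IsTree (nonconstTree D) :=
  fun _ _ hστ ⟨ρ, hτρ, hρ⟩ => ⟨ρ, hστ.trans hτρ, hρ⟩

lemma mem_nonconstTree_iff {D : Finset ℕ} {σ : List Bool} (hD : ∀ a ∈ D, a < σ.length) :
    σ ∈ nonconstTree D ↔
      (∃ a ∈ D, σ.getD a true = false) ∧ ∃ b ∈ D, σ.getD b false = true := by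
  constructor
  · rintro ⟨τ, hστ, a, ha, b, hb, -, -, hτa, hτb⟩
    have getD_eq (c : ℕ) (hc : c ∈ D) (d : Bool) : σ.getD c d = τ.getD c d := by
      rw [List.getD_eq_getElem _ _ (hD c hc),
        List.getD_eq_getElem _ _ ((hD c hc).trans_le hστ.length_le), hστ.getElem]
    exact ⟨⟨a, ha, (getD_eq a ha true).trans hτa⟩, b, hb, (getD_eq b hb false).trans hτb⟩
  · rintro ⟨⟨a, ha, hσa⟩, b, hb, hσb⟩
    exact ⟨σ, List.prefix_refl σ, a, ha, b, hb, hD a ha, hD b hb, hσa, hσb⟩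

lemma lvlCard_compl_nonconstTree {D : Finset ℕ} (hne : D.Nonempty) {s : ℕ}
    (hD : ∀ a ∈ D, a < s) : lvlCard (nonconstTree D)ᶜ s = 2 ^ (s - #D + 1) := by
  have hcard : #(D.attachFin hD)ᶜ = s - #D := by
    rw [card_compl, card_attachFin, Fintype.card_fin]
  have hne' : (D.attachFin hD).Nonempty := by
    rw [← card_pos, card_attachFin]
    exact hne.card_pos
  rw [← hcard, ← card_filter_constOn_bool _ hne', lvlCard_eq_card_ofFn]
  congr 1
  ext f
  have hexists (d v : Bool) :
      (∃ a ∈ D, (List.ofFn f).getD a d = v) ↔ ∃ j ∈ D.attachFin hD, f j = v := by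
    simp only [mem_attachFin, List.getD_eq_getElem?_getD, List.getElem?_ofFn]
    constructor
    · rintro ⟨a, ha, h⟩
      exact ⟨⟨a, hD a ha⟩, ha, by simpa [hD a ha] using h⟩
    · rintro ⟨j, hj, h⟩
      exact ⟨j, hj, by simpa using h⟩
  simp only [mem_filter, mem_univ, true_and, Set.mem_compl_iff]
  rw [mem_nonconstTree_iff (by simpa using hD), hexists, hexists]

lemma treeMeasure_nonconstTree {D : Finset ℕ} (hne : D.Nonempty) :
    treeMeasure (nonconstTree D) = 1 - 1 / 2 ^ (#D - 1) := by
  refine (isTree_nonconstTree D).treeMeasure_eq (N := D.sup id + 1) fun s hs => ?_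
  have hD : ∀ a ∈ D, a < s := fun a ha => (Nat.lt_succ_of_le (le_sup (f := id) ha)).trans_le hs
  have hcard : #D ≤ s := by
    simpa using card_le_card (fun a ha => mem_range.2 (hD a ha) : D ⊆ range s)
  have hpos : 0 < #D := hne.card_pos
  rw [lvlCard_div_two_pow_eq_one_sub, lvlCard_compl_nonconstTree hne hD]
  push_cast
  congr 1
  rw [div_eq_div_iff (by positivity) (by positivity), one_mul, ← pow_add]
  congr 1
  omega

theorem stmt13 (n : ℕ) (D : ℕ → Finset ℕ) (hD : ∀ i, (D i).card = i + 2 + n)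
    (T : ℕ → Set (List Bool))
    (hT : ∀ i, T i = {σ : List Bool | ∃ τ : List Bool, σ <+: τ ∧
      ∃ a ∈ D i, ∃ b ∈ D i, a < τ.length ∧ b < τ.length ∧
        τ.getD a true = false ∧ τ.getD b false = true}) :
    (∀ i, treeMeasure (T i) = 1 - 1 / 2 ^ (i + 1 + n)) ∧
    1 - 1 / 2 ^ n ≤ treeMeasure (⋂ i, T i) := by
  obtain rfl : T = fun i => nonconstTree (D i) := funext hT
  have hmeasure (i : ℕ) : treeMeasure (nonconstTree (D i)) = 1 - 1 / 2 ^ (i + 1 + n) := by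
    rw [treeMeasure_nonconstTree (card_pos.1 (by rw [hD i]; omega)), hD i,
      show i + 2 + n - 1 = i + 1 + n by omega]
  exact ⟨hmeasure, one_sub_le_treeMeasure_iInter _ n fun i => (hmeasure i).ge⟩

end
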